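/- In misère Partizan Kayles, S₂ is strictly greater than S₁ + S₁ modulo the Kayles universe: for all Kayles positions X, o⁻(S₂ + X) ≥ o⁻(2S₁ + X) in the outcome order, and there exists X (namely X = 0, the empty position) with o⁻(S₂ + X) ≠ o⁻(2S₁ + X). -/

import Mathlib

/-- Add a strip of length `k` to a position (strips of length 0 are discarded). -/
def addStrip (m : Multiset ℕ) (k : ℕ) : Multiset ℕ := if k = 0 then m else k ::ₘ m

/-- Left removes one square from a strip of length `n ≥ 1`, leaving strips `i` and `n-1-i`. -/
def LeftMove (G G' : Multiset ℕ) : Prop :=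
  ∃ n ∈ G, ∃ i, i + 1 ≤ n ∧ G' = addStrip (addStrip (G.erase n) i) (n - 1 - i)

/-- Right removes two adjacent squares from a strip of length `n ≥ 2`, leaving `i` and `n-2-i`. -/
def RightMove (G G' : Multiset ℕ) : Prop :=
  ∃ n ∈ G, ∃ i, i + 2 ≤ n ∧ G' = addStrip (addStrip (G.erase n) i) (n - 2 - i)

mutual
  /-- Misère play: Left, to move, wins (a player unable to move wins). -/
  inductive LeftWinsMover : Multiset ℕ → Prop
    | cannot (G : Multiset ℕ) : (¬ ∃ G', LeftMove G G') → LeftWinsMover G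
    | move (G G' : Multiset ℕ) : LeftMove G G' → LeftWinsWaiter G' → LeftWinsMover G
  /-- Misère play: Left wins with Right to move. -/
  inductive LeftWinsWaiter : Multiset ℕ → Prop
    | intro (G : Multiset ℕ) : (∃ G', RightMove G G') →
        (∀ G', RightMove G G' → LeftWinsMover G') → LeftWinsWaiter G
end

inductive Outcome | L | N | P | R
  deriving DecidableEq

open Classical in
/-- The misère outcome `o⁻(G)`. -/
noncomputable def outcome (G : Multiset ℕ) : Outcome :=
  if LeftWinsMover G then (if LeftWinsWaiter G then Outcome.L else Outcome.N)
  else (if LeftWinsWaiter G then Outcome.P else Outcome.R)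

/-- The partial order on outcomes: `L` greatest, `R` least, `N` and `P` incomparable. -/
def Outcome.le (a b : Outcome) : Prop := a = b ∨ a = Outcome.R ∨ b = Outcome.L

/-- `pos k j` is the position `kS₁ + jS₂`. -/
def pos (k j : ℕ) : Multiset ℕ := Multiset.replicate k 1 + Multiset.replicate j 2

/-! Weight a strip by `stripWeight`, so that `excess G` is the number of strips `≡ 2 (mod 3)` minus
the number of strips `≡ 1 (mod 3)`. Since `stripWeight n ≡ -n (mod 3)`, every Left move changes the
excess by `1` or `-2`, and every Right move by `-1` or `2`. Left, to move, wins exactly when the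
excess is a nonnegative multiple of `3`: she can always raise it by one, and Right can always lower
it by one. Left wins with Right to move exactly when the excess is nonnegative and `≡ 1 (mod 3)`.
Hence the outcome depends only on the excess, and `2S₁` lowers it by `2` where `S₂` raises it by `1`.
-/

def stripWeight (n : ℕ) : ℤ := if n % 3 = 1 then -1 else if n % 3 = 2 then 1 else 0

@[simp]
lemma stripWeight_zero : stripWeight 0 = 0 := rfl

def excess (G : Multiset ℕ) : ℤ := (G.map stripWeight).sum

@[simp]
lemma excess_cons (n : ℕ) (G : Multiset ℕ) : excess (n ::ₘ G) = stripWeight n + excess G := by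
  simp [excess]

lemma excess_addStrip (G : Multiset ℕ) (k : ℕ) :
    excess (addStrip G k) = excess G + stripWeight k := by
  unfold addStrip
  split_ifs with hk
  · simp [hk]
  · rw [excess_cons, add_comm]

lemma excess_erase {G : Multiset ℕ} {n : ℕ} (hn : n ∈ G) :
    excess (G.erase n) = excess G - stripWeight n := by
  conv_rhs => rw [← Multiset.cons_erase hn, excess_cons]
  ring

lemma excess_split {G : Multiset ℕ} {n : ℕ} (hn : n ∈ G) (i j : ℕ) :
    excess (addStrip (addStrip (G.erase n) i) j)
      = excess G - stripWeight n + stripWeight i + stripWeight j := by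
  rw [excess_addStrip, excess_addStrip, excess_erase hn]

lemma exists_mem_stripWeight_pos {G : Multiset ℕ} (h : 0 < excess G) :
    ∃ m ∈ G, 0 < stripWeight m := by
  by_contra! hG
  have : excess G ≤ (G.map fun _ => (0 : ℤ)).sum := Multiset.sum_map_le_sum_map _ _ hG
  simp only [Multiset.map_const', Multiset.sum_replicate, nsmul_zero] at this
  omega

lemma exists_mem_stripWeight_neg {G : Multiset ℕ} {n : ℕ} (hn : n ∈ G)
    (h : excess G < stripWeight n) : ∃ m ∈ G, stripWeight m < 0 := by
  by_contra! hG
  have : stripWeight n ≤ excess G :=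
    Multiset.single_le_sum (by simpa using hG) _ (Multiset.mem_map_of_mem _ hn)
  omega

lemma LeftMove.excess_eq {G G' : Multiset ℕ} (h : LeftMove G G') :
    excess G' = excess G + 1 ∨ excess G' = excess G - 2 := by
  obtain ⟨n, hn, i, hi, rfl⟩ := h
  rw [excess_split hn]
  unfold stripWeight
  split_ifs <;> omega

lemma RightMove.excess_eq {G G' : Multiset ℕ} (h : RightMove G G') :
    excess G' = excess G - 1 ∨ excess G' = excess G + 2 := by
  obtain ⟨n, hn, i, hi, rfl⟩ := h
  rw [excess_split hn]
  unfold stripWeight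
  split_ifs <;> omega

lemma sum_addStrip (G : Multiset ℕ) (k : ℕ) : (addStrip G k).sum = G.sum + k := by
  unfold addStrip
  split_ifs with hk
  · simp [hk]
  · rw [Multiset.sum_cons, add_comm]

lemma LeftMove.sum_lt {G G' : Multiset ℕ} (h : LeftMove G G') : G'.sum < G.sum := by
  obtain ⟨n, hn, i, hi, rfl⟩ := h
  rw [sum_addStrip, sum_addStrip, ← Multiset.sum_erase hn]
  omega

lemma RightMove.sum_lt {G G' : Multiset ℕ} (h : RightMove G G') : G'.sum < G.sum := by
  obtain ⟨n, hn, i, hi, rfl⟩ := h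
  rw [sum_addStrip, sum_addStrip, ← Multiset.sum_erase hn]
  omega

/-- Taking an end square off a strip `≢ 2 (mod 3)` raises the excess by one. -/
lemma exists_leftMove_excess_add_one {G : Multiset ℕ} (hG : excess G ≤ 0) {n : ℕ} (hn : n ∈ G)
    (hn0 : 0 < n) : ∃ G', LeftMove G G' ∧ excess G' = excess G + 1 := by
  obtain ⟨m, hm, hm0, hm2⟩ : ∃ m ∈ G, 0 < m ∧ m % 3 ≠ 2 := by
    by_cases hn2 : n % 3 = 2
    · obtain ⟨m, hm, hneg⟩ := exists_mem_stripWeight_neg hn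
        (by rw [show stripWeight n = 1 by simp [stripWeight, hn2]]; omega)
      refine ⟨m, hm, ?_⟩
      unfold stripWeight at hneg
      split_ifs at hneg <;> omega
    · exact ⟨n, hn, hn0, hn2⟩
  refine ⟨_, ⟨m, hm, 0, by omega, rfl⟩, ?_⟩
  rw [excess_split hm, stripWeight_zero]
  unfold stripWeight
  split_ifs <;> omega

lemma exists_rightMove_excess_sub_one {G : Multiset ℕ} {n : ℕ} (hn : n ∈ G) (hn2 : 2 ≤ n) :
    ∃ G', RightMove G G' ∧ excess G' = excess G - 1 := by
  obtain ⟨i, hi, hij⟩ : ∃ i, i + 2 ≤ n ∧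
      stripWeight i + stripWeight (n - 2 - i) = stripWeight n - 1 := by
    by_cases h1 : n % 3 = 1
    · exact ⟨1, by omega, by unfold stripWeight; split_ifs <;> omega⟩
    · exact ⟨0, hn2, by rw [stripWeight_zero]; unfold stripWeight; split_ifs <;> omega⟩
  exact ⟨_, ⟨n, hn, i, hi, rfl⟩, by rw [excess_split hn]; omega⟩

lemma leftWinsMover_iff_of_forall_leftMove {G : Multiset ℕ}
    (ih : ∀ G', LeftMove G G' → (LeftWinsWaiter G' ↔ 0 ≤ excess G' ∧ excess G' % 3 = 1)) :
    LeftWinsMover G ↔ 0 ≤ excess G ∧ excess G % 3 = 0 := by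
  constructor
  · rintro (⟨_, hstuck⟩ | ⟨_, G', hmv, hwin⟩)
    · have hG : ∀ n ∈ G, n = 0 := fun n hn => by
        by_contra hn0
        exact hstuck ⟨_, n, hn, 0, by omega, rfl⟩
      have : excess G = 0 := Multiset.sum_eq_zero fun w hw => by
        obtain ⟨n, hn, rfl⟩ := Multiset.mem_map.mp hw
        rw [hG n hn, stripWeight_zero]
      omega
    · have := (ih G' hmv).mp hwin
      rcases hmv.excess_eq with h | h <;> omega
  · rintro ⟨h0, h3⟩
    by_cases hex : ∃ G', LeftMove G G'
    · obtain ⟨G', hmv, hG'⟩ : ∃ G', LeftMove G G' ∧ 0 ≤ excess G' ∧ excess G' % 3 = 1 := by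
        by_cases hpos : 0 < excess G
        · obtain ⟨G', hmv⟩ := hex
          exact ⟨G', hmv, by rcases hmv.excess_eq with h | h <;> omega⟩
        · obtain ⟨_, n, hn, i, hi, _⟩ := hex
          obtain ⟨G', hmv, h⟩ := exists_leftMove_excess_add_one (by omega) hn (by omega)
          exact ⟨G', hmv, by omega⟩
      exact .move G G' hmv ((ih G' hmv).mpr hG')
    · exact .cannot G hex

lemma leftWinsWaiter_iff_of_forall_rightMove {G : Multiset ℕ}
    (ih : ∀ G', RightMove G G' → (LeftWinsMover G' ↔ 0 ≤ excess G' ∧ excess G' % 3 = 0)) :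
    LeftWinsWaiter G ↔ 0 ≤ excess G ∧ excess G % 3 = 1 := by
  constructor
  · rintro ⟨_, ⟨_, n, hn, i, hi, _⟩, hall⟩
    obtain ⟨G', hmv, h⟩ := exists_rightMove_excess_sub_one hn (by omega)
    have := (ih G' hmv).mp (hall G' hmv)
    omega
  · rintro ⟨h0, h3⟩
    obtain ⟨m, hm, hpos⟩ := exists_mem_stripWeight_pos (G := G) (by omega)
    have hm2 : 2 ≤ m := by
      unfold stripWeight at hpos
      split_ifs at hpos <;> omega
    refine .intro G ⟨_, m, hm, 0, hm2, rfl⟩ fun G' hmv => (ih G' hmv).mpr ?_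
    rcases hmv.excess_eq with h | h <;> omega

theorem leftWinsMover_iff_and_leftWinsWaiter_iff (G : Multiset ℕ) :
    (LeftWinsMover G ↔ 0 ≤ excess G ∧ excess G % 3 = 0) ∧
      (LeftWinsWaiter G ↔ 0 ≤ excess G ∧ excess G % 3 = 1) := by
  induction hs : G.sum using Nat.strong_induction_on generalizing G with
  | _ s ih =>
    subst hs
    exact ⟨leftWinsMover_iff_of_forall_leftMove fun G' h => (ih _ h.sum_lt G' rfl).2,
      leftWinsWaiter_iff_of_forall_rightMove fun G' h => (ih _ h.sum_lt G' rfl).1⟩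

def outcomeOfExcess (e : ℤ) : Outcome :=
  if 0 ≤ e ∧ e % 3 = 0 then .N else if 0 ≤ e ∧ e % 3 = 1 then .P else .R

theorem outcome_eq_outcomeOfExcess (G : Multiset ℕ) : outcome G = outcomeOfExcess (excess G) := by
  obtain ⟨hM, hW⟩ := leftWinsMover_iff_and_leftWinsWaiter_iff G
  unfold outcome outcomeOfExcess
  simp only [hM, hW]
  split_ifs <;> first | rfl | omega

lemma outcomeOfExcess_sub_two_le_add_one (e : ℤ) :
    Outcome.le (outcomeOfExcess (e - 2)) (outcomeOfExcess (e + 1)) := by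
  unfold outcomeOfExcess Outcome.le
  split_ifs <;> simp <;> omega

theorem kayles_S2_gt_2S1 :
    (∀ X : Multiset ℕ, 0 ∉ X →
      Outcome.le (outcome (1 ::ₘ 1 ::ₘ X)) (outcome (2 ::ₘ X))) ∧
    outcome (pos 0 1) ≠ outcome (pos 2 0) := by
  refine ⟨fun X _ => ?_, ?_⟩
  · have h2S₁ : excess (1 ::ₘ 1 ::ₘ X) = excess X - 2 := by
      rw [excess_cons, excess_cons, show stripWeight 1 = -1 from rfl]; ring
    have hS₂ : excess (2 ::ₘ X) = excess X + 1 := by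
      rw [excess_cons, show stripWeight 2 = 1 from rfl]; ring
    rw [outcome_eq_outcomeOfExcess, outcome_eq_outcomeOfExcess, h2S₁, hS₂]
    exact outcomeOfExcess_sub_two_le_add_one (excess X)
  · rw [outcome_eq_outcomeOfExcess, outcome_eq_outcomeOfExcess,
      show excess (pos 0 1) = 1 from rfl, show excess (pos 2 0) = -2 from rfl]
    decide
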